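/- Assume 0 < μ < (N+2)/2 and (f1)–(f3). Let u be a positive weak solution of the penalized problem (APE) with ℓ = ℓ₀ that satisfies the decay estimate u(x) ≤ R^{N−2} M₀ / |x|^{N−2} for all |x| ≥ R. Then f(u(x))/u(x) ≤ c₀ M₀^{q−2} R^{(q−2)(N−2)} / |x|^{(q−2)(N−2)} for all |x| ≥ R, and consequently, if 𝒱(R) > 𝒱₀ := c₀ ℓ₀ M₀^{q−2}, then ℓ₀ f(u(x)) ≤ V(x) u(x) for all |x| ≥ R, so that u is a positive weak solution of the original equation −Δu + V(x)u = (|x|^{−μ} ∗ F(u)) f(u) in ℝ^N. -/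

import Mathlib

open MeasureTheory Real Filter Set Topology Metric
open scoped RealInnerProductSpace ENNReal

noncomputable section

abbrev RN (N : ℕ) := EuclideanSpace ℝ (Fin N)

/-- `Fprim f t = ∫₀ᵗ f(s) ds`, the primitive of `f`. -/
def Fprim (f : ℝ → ℝ) (t : ℝ) : ℝ := ∫ s in (0:ℝ)..t, f s

/-- membership in `D^{1,2}(ℝ^N)`. -/
def MemD12 {N : ℕ} (u : RN N → ℝ) : Prop :=
  MemLp u (ENNReal.ofReal (2 * (N:ℝ) / ((N:ℝ) - 2))) volume ∧
  MemLp (fun x => gradient u x) 2 volume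

/-- membership in `E = {u ∈ D^{1,2} : ∫ V u² < ∞}`. -/
def MemE {N : ℕ} (V u : RN N → ℝ) : Prop :=
  MemD12 u ∧ Integrable (fun x => V x * (u x) ^ 2) volume

/-- `‖u‖² = ∫ (|∇u|² + V u²)`. -/
def normE2 {N : ℕ} (V u : RN N → ℝ) : ℝ :=
  ∫ x, (‖gradient u x‖ ^ 2 + V x * (u x) ^ 2)

/-- the Riesz kernel `|x - y|^{-μ}`. -/
def riesz {N : ℕ} (μ : ℝ) (x y : RN N) : ℝ := ‖x - y‖ ^ (-μ)

/-- (f1): `limsup_{s→0⁺} s f(s)/s^q < ∞`. -/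
def Hf1 (f : ℝ → ℝ) (q : ℝ) : Prop :=
  ∃ C : ℝ, ∀ᶠ s in 𝓝[>] (0:ℝ), s * f s / s ^ q ≤ C

/-- (f2): `lim_{s→+∞} s f(s)/s^p = 0`. -/
def Hf2 (f : ℝ → ℝ) (p : ℝ) : Prop :=
  Tendsto (fun s => s * f s / s ^ p) atTop (𝓝 0)

/-- (f3): `0 < θ F(s) ≤ 2 f(s) s` for `s > 0`. -/
def Hf3 (f : ℝ → ℝ) (θ : ℝ) : Prop :=
  ∀ s : ℝ, 0 < s → 0 < θ * Fprim f s ∧ θ * Fprim f s ≤ 2 * f s * s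

/-- the penalized nonlinearity `f̂`. -/
def fhat {N : ℕ} (f : ℝ → ℝ) (V : RN N → ℝ) (ℓ : ℝ) (x : RN N) (s : ℝ) : ℝ :=
  if ℓ * f s ≤ V x * s then f s else V x * s / ℓ

/-- the penalized nonlinearity `g`. -/
def gpen {N : ℕ} (f : ℝ → ℝ) (V : RN N → ℝ) (ℓ R : ℝ) (x : RN N) (s : ℝ) : ℝ :=
  if ‖x‖ < R then f s else fhat f V ℓ x s

/-- `G(x,s) = ∫₀ˢ g(x,τ) dτ`. -/
def Gpen {N : ℕ} (f : ℝ → ℝ) (V : RN N → ℝ) (ℓ R : ℝ) (x : RN N) (s : ℝ) : ℝ :=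
  ∫ τ in (0:ℝ)..s, gpen f V ℓ R x τ

/-- `K(u)(x) = ∫ G(y,u(y)) |x-y|^{-μ} dy`. -/
def Kfun {N : ℕ} (μ : ℝ) (f : ℝ → ℝ) (V : RN N → ℝ) (ℓ R : ℝ)
    (u : RN N → ℝ) (x : RN N) : ℝ :=
  ∫ y, Gpen f V ℓ R y (u y) * riesz μ x y

/-- `Ψ(u) = ½ ∫∫ G(x,u(x)) G(y,u(y)) |x-y|^{-μ}`. -/
def Psi {N : ℕ} (μ : ℝ) (f : ℝ → ℝ) (V : RN N → ℝ) (ℓ R : ℝ) (u : RN N → ℝ) : ℝ :=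
  (1/2) * ∫ x, ∫ y, Gpen f V ℓ R x (u x) * Gpen f V ℓ R y (u y) * riesz μ x y

/-- the penalized functional `Φ(u) = ½‖u‖² − Ψ(u)`. -/
def Phi {N : ℕ} (μ : ℝ) (f : ℝ → ℝ) (V : RN N → ℝ) (ℓ R : ℝ) (u : RN N → ℝ) : ℝ :=
  (1/2) * normE2 V u - Psi μ f V ℓ R u

/-- `Ψ'(u)φ = ∫∫ G(y,u(y)) g(x,u(x)) φ(x) |x-y|^{-μ}`. -/
def PsiDeriv {N : ℕ} (μ : ℝ) (f : ℝ → ℝ) (V : RN N → ℝ) (ℓ R : ℝ)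
    (u φ : RN N → ℝ) : ℝ :=
  ∫ x, Kfun μ f V ℓ R u x * gpen f V ℓ R x (u x) * φ x

/-- `Φ'(u)φ`. -/
def PhiDeriv {N : ℕ} (μ : ℝ) (f : ℝ → ℝ) (V : RN N → ℝ) (ℓ R : ℝ)
    (u φ : RN N → ℝ) : ℝ :=
  (∫ x, (⟪gradient u x, gradient φ x⟫ + V x * u x * φ x)) - PsiDeriv μ f V ℓ R u φ

/-- weak solutions of the penalized problem (APE). -/
def IsWeakSolAPE {N : ℕ} (μ : ℝ) (f : ℝ → ℝ) (V : RN N → ℝ) (ℓ R : ℝ)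
    (u : RN N → ℝ) : Prop :=
  MemE V u ∧ ∀ φ : RN N → ℝ, MemE V φ → PhiDeriv μ f V ℓ R u φ = 0

/-- weak solutions of the original Choquard equation. -/
def IsWeakSolOrig {N : ℕ} (μ : ℝ) (f : ℝ → ℝ) (V : RN N → ℝ) (u : RN N → ℝ) : Prop :=
  MemE V u ∧ ∀ φ : RN N → ℝ, MemE V φ →
    (∫ x, (⟪gradient u x, gradient φ x⟫ + V x * u x * φ x)) =
    ∫ x, (∫ y, Fprim f (u y) * riesz μ x y) * f (u x) * φ x

/-- `m = max_{|x| ≤ 1} V(x)`. -/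
def mconst {N : ℕ} (V : RN N → ℝ) : ℝ := sSup (V '' Metric.closedBall (0 : RN N) 1)

/-- `𝒱(R) = R^{-(q-2)(N-2)} inf_{|x| ≥ R} |x|^{(q-2)(N-2)} V(x)`. -/
def calV {N : ℕ} (V : RN N → ℝ) (q R : ℝ) : ℝ :=
  (1 / R ^ ((q - 2) * ((N:ℝ) - 2))) *
    sInf ((fun x : RN N => ‖x‖ ^ ((q - 2) * ((N:ℝ) - 2)) * V x) '' {x : RN N | R ≤ ‖x‖})

/-- `𝒲(R) = inf_{|x| ≥ R} |x|^{(4-μ)/2} V(x)`. -/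
def calW {N : ℕ} (V : RN N → ℝ) (μ R : ℝ) : ℝ :=
  sInf ((fun x : RN N => ‖x‖ ^ ((4 - μ) / 2) * V x) '' {x : RN N | R ≤ ‖x‖})

/-- membership in `H¹₀(B₁)`, viewed inside `E` by zero extension. -/
def H10B1 {N : ℕ} (u : RN N → ℝ) : Prop :=
  MemD12 u ∧ Integrable (fun x => (u x) ^ 2) volume ∧
    ∀ x : RN N, x ∉ Metric.closedBall (0 : RN N) 1 → u x = 0

/-- the comparison functional `Φ̃` on `H¹₀(B₁)`. -/
def PhiTilde (N : ℕ) (μ m : ℝ) (f : ℝ → ℝ) (u : RN N → ℝ) : ℝ :=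
  (1/2) * (∫ x in Metric.ball (0 : RN N) 1, (‖gradient u x‖ ^ 2 + m * (u x) ^ 2)) -
  (1/2) * ∫ x in Metric.ball (0 : RN N) 1, ∫ y in Metric.ball (0 : RN N) 1,
    Fprim f (u x) * Fprim f (u y) * riesz μ x y

/-- `d = inf_{u ∈ H¹₀(B₁) \ {0}} max_{t ≥ 0} Φ̃(t u)`. -/
def dlevel (N : ℕ) (μ m : ℝ) (f : ℝ → ℝ) : ℝ :=
  sInf { c : ℝ | ∃ u : RN N → ℝ, H10B1 u ∧ u ≠ 0 ∧
    c = sSup ((fun t : ℝ => PhiTilde N μ m f (fun x => t * u x)) '' Ici 0) }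

/-- admissible mountain-pass paths: `γ(0) = 0`, `Φ(γ(1)) < 0`, `γ` continuous into `E`. -/
def AdmPath {N : ℕ} (μ : ℝ) (f : ℝ → ℝ) (V : RN N → ℝ) (ℓ R : ℝ)
    (γ : ℝ → RN N → ℝ) : Prop :=
  γ 0 = 0 ∧ (∀ t ∈ Icc (0:ℝ) 1, MemE V (γ t)) ∧ Phi μ f V ℓ R (γ 1) < 0 ∧
  ∀ t ∈ Icc (0:ℝ) 1, ∀ ε > (0:ℝ), ∃ δ > (0:ℝ), ∀ t' ∈ Icc (0:ℝ) 1, |t' - t| < δ →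
    normE2 V (fun x => γ t' x - γ t x) < ε

/-- the mountain pass level `c_V`. -/
def cV {N : ℕ} (μ : ℝ) (f : ℝ → ℝ) (V : RN N → ℝ) (ℓ R : ℝ) : ℝ :=
  sInf { c : ℝ | ∃ γ : ℝ → RN N → ℝ, AdmPath μ f V ℓ R γ ∧
    c = sSup ((fun t => Phi μ f V ℓ R (γ t)) '' Icc (0:ℝ) 1) }

/-- Palais–Smale sequences for `Φ` at level `c`. -/
def IsPSSeq {N : ℕ} (μ : ℝ) (f : ℝ → ℝ) (V : RN N → ℝ) (ℓ R c : ℝ)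
    (u : ℕ → RN N → ℝ) : Prop :=
  (∀ n, MemE V (u n)) ∧
  Tendsto (fun n => Phi μ f V ℓ R (u n)) atTop (𝓝 c) ∧
  ∃ ε : ℕ → ℝ, Tendsto ε atTop (𝓝 0) ∧
    ∀ n, ∀ φ : RN N → ℝ, MemE V φ →
      |PhiDeriv μ f V ℓ R (u n) φ| ≤ ε n * Real.sqrt (normE2 V φ)

/-- the ball `𝓑 = {u ∈ E : ‖u‖² ≤ (2θ/(θ-2))(d+1)}`. -/
def Bset {N : ℕ} (V : RN N → ℝ) (θ d : ℝ) : Set (RN N → ℝ) :=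
  {u | MemE V u ∧ normE2 V u ≤ (2 * θ / (θ - 2)) * (d + 1)}

/-- the defining property of the penalization constant `ℓ₀`:
`sup_{u ∈ 𝓑} ‖K(u)‖_∞ / ℓ₀ < 1/2`, uniformly in `ℓ > 1` and `R > 1`. -/
def L0Good {N : ℕ} (μ : ℝ) (f : ℝ → ℝ) (V : RN N → ℝ) (θ ℓ₀ : ℝ) : Prop :=
  ∀ ℓ R : ℝ, 1 < ℓ → 1 < R → ∃ c : ℝ, c < ℓ₀ / 2 ∧
    ∀ u ∈ Bset V θ (dlevel N μ (mconst V) f), ∀ x : RN N, |Kfun μ f V ℓ R u x| ≤ c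


/-!
Outside the ball `B_R` the decay estimate gives `u(x)^{q-2} ≤ M₀^{q-2} (R/|x|)^{(q-2)(N-2)}`, so the
growth bound `|f(s)| ≤ c₀ |s|^{q-1}` yields `f(τ) ≤ c₀ M₀^{q-2} (R/|x|)^{(q-2)(N-2)} τ` for every
`τ ∈ [0, u(x)]`. When `𝒱(R) > c₀ ℓ₀ M₀^{q-2}` the right-hand side is at most `V(x) τ / ℓ₀`, so the
penalization is inactive along the whole segment `[0, u(x)]`: there `g(x, ·) = f` and
`G(x, u(x)) = F(u(x))`, and the penalized equation is the original one.
-/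

theorem apply_le_mul_rpow_mul_of_abs_le {f : ℝ → ℝ} {c q b τ : ℝ} (hq : 2 ≤ q) (hc : 0 ≤ c)
    (hgrow : ∀ s, |f s| ≤ c * |s| ^ (q - 1)) (hτ : 0 ≤ τ) (hτb : τ ≤ b) :
    f τ ≤ c * b ^ (q - 2) * τ :=
  calc f τ ≤ c * |τ| ^ (q - 1) := (le_abs_self _).trans (hgrow τ)
    _ = c * (τ ^ (q - 2) * τ) := by
      rw [abs_of_nonneg hτ, ← Real.rpow_add_one' hτ (by linarith)]
      ring_nf
    _ ≤ c * b ^ (q - 2) * τ := by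
      rw [← mul_assoc]
      gcongr

theorem rpow_mul_div_rpow_rpow {R M r : ℝ} (hR : 0 ≤ R) (hM : 0 ≤ M) (hr : 0 ≤ r) (a b : ℝ) :
    (R ^ a * M / r ^ a) ^ b = M ^ b * R ^ (b * a) / r ^ (b * a) := by
  rw [Real.div_rpow (by positivity) (by positivity), Real.mul_rpow (by positivity) hM,
    ← Real.rpow_mul hR, ← Real.rpow_mul hr, mul_comm a b, mul_comm (R ^ (b * a))]

theorem apply_le_of_le_decay {f : ℝ → ℝ} {c q a M R r τ : ℝ} (hq : 2 ≤ q) (hc : 0 ≤ c)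
    (hgrow : ∀ s, |f s| ≤ c * |s| ^ (q - 1)) (hR : 0 ≤ R) (hM : 0 ≤ M) (hr : 0 ≤ r)
    (hτ : 0 ≤ τ) (hτb : τ ≤ R ^ a * M / r ^ a) :
    f τ ≤ c * M ^ (q - 2) * R ^ ((q - 2) * a) / r ^ ((q - 2) * a) * τ := by
  have h := apply_le_mul_rpow_mul_of_abs_le hq hc hgrow hτ hτb
  rwa [rpow_mul_div_rpow_rpow hR hM hr, ← mul_div_assoc, ← mul_assoc] at h

theorem mul_rpow_div_rpow_le_of_le_calV {N : ℕ} {V : RN N → ℝ} {q R K : ℝ} (hV0 : ∀ x, 0 ≤ V x)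
    (hR : 0 < R) (hK : K ≤ calV V q R) {x : RN N} (hx : R ≤ ‖x‖) :
    K * R ^ ((q - 2) * ((N:ℝ) - 2)) / ‖x‖ ^ ((q - 2) * ((N:ℝ) - 2)) ≤ V x := by
  set α := (q - 2) * ((N:ℝ) - 2)
  set S := (fun y : RN N => ‖y‖ ^ α * V y) '' {y : RN N | R ≤ ‖y‖}
  have hRα : 0 < R ^ α := Real.rpow_pos_of_pos hR α
  have hxα : 0 < ‖x‖ ^ α := Real.rpow_pos_of_pos (hR.trans_le hx) α
  have hS : sInf S ≤ ‖x‖ ^ α * V x := by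
    refine csInf_le ⟨0, ?_⟩ ⟨x, hx, rfl⟩
    rintro _ ⟨y, -, rfl⟩
    exact mul_nonneg (Real.rpow_nonneg (norm_nonneg y) α) (hV0 y)
  have hKS : K * R ^ α ≤ sInf S := by
    rwa [calV, one_div, inv_mul_eq_div, le_div_iff₀ hRα] at hK
  rw [div_le_iff₀ hxα, mul_comm (V x)]
  exact hKS.trans hS

theorem gpen_eq_of_le {N : ℕ} {f : ℝ → ℝ} {V : RN N → ℝ} {ℓ R s : ℝ} {x : RN N}
    (h : R ≤ ‖x‖ → ℓ * f s ≤ V x * s) : gpen f V ℓ R x s = f s := by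
  unfold gpen fhat
  by_cases hx : ‖x‖ < R
  · rw [if_pos hx]
  · rw [if_neg hx, if_pos (h (not_lt.1 hx))]

theorem Gpen_eq_Fprim_of_le {N : ℕ} {f : ℝ → ℝ} {V : RN N → ℝ} {ℓ R s : ℝ} {x : RN N}
    (hs : 0 ≤ s) (h : R ≤ ‖x‖ → ∀ τ ∈ Icc 0 s, ℓ * f τ ≤ V x * τ) :
    Gpen f V ℓ R x s = Fprim f s := by
  refine intervalIntegral.integral_congr fun τ hτ => gpen_eq_of_le fun hx => h hx τ ?_
  rwa [uIcc_of_le hs] at hτ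

theorem IsWeakSolAPE.isWeakSolOrig {N : ℕ} {μ : ℝ} {f : ℝ → ℝ} {V : RN N → ℝ} {ℓ R : ℝ}
    {u : RN N → ℝ} (hu : IsWeakSolAPE μ f V ℓ R u) (hu0 : ∀ x, 0 ≤ u x)
    (hpen : ∀ x : RN N, R ≤ ‖x‖ → ∀ τ ∈ Icc 0 (u x), ℓ * f τ ≤ V x * τ) :
    IsWeakSolOrig μ f V u := by
  have hg : ∀ x, gpen f V ℓ R x (u x) = f (u x) := fun x =>
    gpen_eq_of_le fun hx => hpen x hx (u x) ⟨hu0 x, le_rfl⟩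
  have hG : ∀ x, Gpen f V ℓ R x (u x) = Fprim f (u x) := fun x =>
    Gpen_eq_Fprim_of_le (hu0 x) (hpen x)
  refine ⟨hu.1, fun φ hφ => ?_⟩
  have h := hu.2 φ hφ
  simp only [PhiDeriv, PsiDeriv, Kfun, hg, hG, sub_eq_zero] at h
  exact h

theorem statement18_general
    (N : ℕ) (hN : 3 ≤ N) (μ q c₀ : ℝ)
    (hq : 2 * (N:ℝ) / ((N:ℝ) - 2) ≤ q)
    (f : ℝ → ℝ)
    (hc₀ : 0 < c₀)
    (V : RN N → ℝ) (hV0 : ∀ x, 0 ≤ V x)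
    (hgrowq : ∀ s : ℝ, |f s| ≤ c₀ * |s| ^ (q - 1))
    (ℓ₀ : ℝ) (hℓ₀ : 1 < ℓ₀)
    (R : ℝ) (hR : 1 < R) (M₀ : ℝ) (hM₀ : 0 < M₀)
    (u : RN N → ℝ) (hupos : ∀ x, 0 < u x) (husol : IsWeakSolAPE μ f V ℓ₀ R u)
    (hudecay : ∀ x : RN N, R ≤ ‖x‖ → u x ≤ R ^ ((N:ℝ) - 2) * M₀ / ‖x‖ ^ ((N:ℝ) - 2)) :
    (∀ x : RN N, R ≤ ‖x‖ →
      f (u x) / u x ≤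
        c₀ * M₀ ^ (q - 2) * R ^ ((q - 2) * ((N:ℝ) - 2)) / ‖x‖ ^ ((q - 2) * ((N:ℝ) - 2))) ∧
    (c₀ * ℓ₀ * M₀ ^ (q - 2) < calV V q R →
      (∀ x : RN N, R ≤ ‖x‖ → ℓ₀ * f (u x) ≤ V x * u x) ∧
      IsWeakSolOrig μ f V u) := by
  have hq2 : 2 ≤ q := by
    have hN2 : (0:ℝ) < N - 2 := by
      have : (3:ℝ) ≤ N := by exact_mod_cast hN
      linarith
    exact le_trans (by rw [le_div_iff₀ hN2]; linarith) hq
  have hbound : ∀ x : RN N, R ≤ ‖x‖ → ∀ τ ∈ Icc 0 (u x),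
      f τ ≤ c₀ * M₀ ^ (q - 2) * R ^ ((q - 2) * ((N:ℝ) - 2)) /
        ‖x‖ ^ ((q - 2) * ((N:ℝ) - 2)) * τ := fun x hx τ hτ =>
    apply_le_of_le_decay hq2 hc₀.le hgrowq (by linarith) hM₀.le (norm_nonneg x) hτ.1
      (hτ.2.trans (hudecay x hx))
  have hpen : c₀ * ℓ₀ * M₀ ^ (q - 2) < calV V q R →
      ∀ x : RN N, R ≤ ‖x‖ → ∀ τ ∈ Icc 0 (u x), ℓ₀ * f τ ≤ V x * τ := by
    intro hcal x hx τ hτ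
    have hV := mul_rpow_div_rpow_le_of_le_calV hV0 (by linarith) hcal.le hx
    calc ℓ₀ * f τ ≤ ℓ₀ * (c₀ * M₀ ^ (q - 2) * R ^ ((q - 2) * ((N:ℝ) - 2)) /
          ‖x‖ ^ ((q - 2) * ((N:ℝ) - 2)) * τ) := by gcongr; exact hbound x hx τ hτ
      _ = c₀ * ℓ₀ * M₀ ^ (q - 2) * R ^ ((q - 2) * ((N:ℝ) - 2)) /
          ‖x‖ ^ ((q - 2) * ((N:ℝ) - 2)) * τ := by ring
      _ ≤ V x * τ := by gcongr; exact hτ.1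
  have hmem : ∀ x, u x ∈ Icc 0 (u x) := fun x => ⟨(hupos x).le, le_rfl⟩
  refine ⟨fun x hx => (div_le_iff₀ (hupos x)).2 (hbound x hx (u x) (hmem x)), fun hcal =>
    ⟨fun x hx => hpen hcal x hx (u x) (hmem x),
      husol.isWeakSolOrig (fun x => (hupos x).le) (hpen hcal)⟩⟩

theorem statement18
    (N : ℕ) (hN : 3 ≤ N) (μ q p θ c₀ : ℝ)
    (hμ0 : 0 < μ) (hμN : μ < (N:ℝ)) (hμ2 : μ < ((N:ℝ) + 2) / 2)
    (hq : 2 * (N:ℝ) / ((N:ℝ) - 2) ≤ q)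
    (hp1 : 1 < p) (hp2 : p < 2 * ((N:ℝ) - μ) / ((N:ℝ) - 2))
    (hθ1 : 2 < θ) (hθ2 : θ < 4)
    (f : ℝ → ℝ) (hf : Continuous f) (hf0 : ∀ s < (0:ℝ), f s = 0)
    (hf1 : Hf1 f q) (hf2 : Hf2 f p) (hf3 : Hf3 f θ)
    (hc₀ : 0 < c₀)
    (hgrow : ∀ s : ℝ,
      |s * f s| ≤ c₀ * |s| ^ (2 * (N:ℝ) / ((N:ℝ) - 2)) ∧
      |s * f s| ≤ c₀ * |s| ^ q ∧
      |s * f s| ≤ c₀ * |s| ^ ((2 * (N:ℝ) - μ) / ((N:ℝ) - 2)) ∧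
      |s * f s| ≤ c₀ * |s| ^ p)
    (V : RN N → ℝ) (hV : Continuous V) (hV0 : ∀ x, 0 ≤ V x)
    (hgrowq : ∀ s : ℝ, |f s| ≤ c₀ * |s| ^ (q - 1))
    (ℓ₀ : ℝ) (hℓ₀ : 1 < ℓ₀) (hL0 : L0Good μ f V θ ℓ₀)
    (R : ℝ) (hR : 1 < R) (M₀ : ℝ) (hM₀ : 0 < M₀)
    (u : RN N → ℝ) (hupos : ∀ x, 0 < u x) (husol : IsWeakSolAPE μ f V ℓ₀ R u)
    (hudecay : ∀ x : RN N, R ≤ ‖x‖ → u x ≤ R ^ ((N:ℝ) - 2) * M₀ / ‖x‖ ^ ((N:ℝ) - 2)) :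
    (∀ x : RN N, R ≤ ‖x‖ →
      f (u x) / u x ≤
        c₀ * M₀ ^ (q - 2) * R ^ ((q - 2) * ((N:ℝ) - 2)) / ‖x‖ ^ ((q - 2) * ((N:ℝ) - 2))) ∧
    (c₀ * ℓ₀ * M₀ ^ (q - 2) < calV V q R →
      (∀ x : RN N, R ≤ ‖x‖ → ℓ₀ * f (u x) ≤ V x * u x) ∧
      IsWeakSolOrig μ f V u) :=
  statement18_general N hN μ q c₀ hq f hc₀ V hV0 hgrowq ℓ₀ hℓ₀ R hR M₀ hM₀ u hupos husol hudecay
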